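/- Let η ∈ A ∩ H⁴(S¹; ℝ^d) be a constant-speed closed curve with length L = |∂_s η|. Given z ∈ H²(S¹;ℝ^d), suppose σ : S¹ → ℝ solves L² ∂_{ss}σ − |∂_{ss}η|² σ = ∂_s z · ∂_s η + c for some constant c, with ∫₀¹ σ ds = 0. Then w := z − ∂_s(σ ∂_s η) satisfies ∂_s w · ∂_s η ≡ const on S¹, and for every tangent vector v with ∂_s v · ∂_s η ≡ const and ∫₀¹ v ds = 0 we have ∫₀¹ ∂_s(σ ∂_s η) · v ds = 0. -/

import Mathlib

/-!
Differentiating `‖∂ₛη‖² ≡ L²` twice gives `∂ₛₛη ⊥ ∂ₛη` and `∂ₛₛₛη · ∂ₛη = -‖∂ₛₛη‖²`, so the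
tangential part of `∂ₛₛ(σ ∂ₛη)` is `L² ∂ₛₛσ - ‖∂ₛₛη‖² σ`, which the equation for `σ` turns into
`∂ₛz · ∂ₛη + c`; hence `∂ₛw · ∂ₛη ≡ -c`. Integrating by parts over the period,
`∫ ∂ₛ(σ ∂ₛη) · v = -∫ σ (∂ₛη · ∂ₛv) = -C_v ∫ σ = 0`.
-/

open Real MeasureTheory intervalIntegral RealInnerProductSpace

noncomputable section

theorem Function.Periodic.deriv {E : Type*} [NormedAddCommGroup E] [NormedSpace ℝ E]
    {f : ℝ → E} {T : ℝ} (hf : Function.Periodic f T) : Function.Periodic (deriv f) T :=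
  fun x => by rw [← deriv_comp_add_const, funext hf]

section InnerProduct

variable {E : Type*} [NormedAddCommGroup E] [InnerProductSpace ℝ E]

theorem inner_deriv_add_inner_deriv_eq_zero_of_inner_eq {f g : ℝ → E} {C s : ℝ}
    (hf : DifferentiableAt ℝ f s) (hg : DifferentiableAt ℝ g s)
    (h : ∀ t, ⟪f t, g t⟫ = C) :
    ⟪f s, deriv g s⟫ + ⟪deriv f s, g s⟫ = 0 := by
  have hd := hf.hasDerivAt.inner ℝ hg.hasDerivAt
  rw [show (fun t => ⟪f t, g t⟫) = fun _ => C from funext h] at hd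
  exact hd.unique (hasDerivAt_const s C)

theorem inner_deriv_self_eq_zero_of_norm_eq {T : ℝ → E} {L s : ℝ}
    (hT : Differentiable ℝ T) (hL : ∀ t, ‖T t‖ = L) : ⟪deriv T s, T s⟫ = 0 := by
  have h := inner_deriv_add_inner_deriv_eq_zero_of_inner_eq (hT s) (hT s) (C := L ^ 2)
    fun t => by rw [real_inner_self_eq_norm_sq, hL]
  rw [real_inner_comm] at h
  linarith

theorem inner_deriv_deriv_self_eq_neg_of_norm_eq {T : ℝ → E} {L s : ℝ}
    (hT : ContDiff ℝ 2 T) (hL : ∀ t, ‖T t‖ = L) :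
    ⟪deriv (deriv T) s, T s⟫ = -‖deriv T s‖ ^ 2 := by
  have hdT : Differentiable ℝ T := hT.differentiable (by norm_num)
  have hdT' : Differentiable ℝ (deriv T) := hT.deriv'.differentiable one_ne_zero
  have h := inner_deriv_add_inner_deriv_eq_zero_of_inner_eq (hdT' s) (hdT s) (C := 0)
    fun t => inner_deriv_self_eq_zero_of_norm_eq hdT hL
  rw [real_inner_self_eq_norm_sq] at h
  linarith

theorem deriv_deriv_smul {σ : ℝ → ℝ} {T : ℝ → E} {s : ℝ}
    (hσ : ContDiff ℝ 2 σ) (hT : ContDiff ℝ 2 T) :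
    deriv (deriv fun r => σ r • T r) s =
      deriv (deriv σ) s • T s + (2 * deriv σ s) • deriv T s + σ s • deriv (deriv T) s := by
  have hdσ : Differentiable ℝ σ := hσ.differentiable (by norm_num)
  have hdT : Differentiable ℝ T := hT.differentiable (by norm_num)
  have hdσ' : Differentiable ℝ (deriv σ) := hσ.deriv'.differentiable one_ne_zero
  have hdT' : Differentiable ℝ (deriv T) := hT.deriv'.differentiable one_ne_zero
  have hfirst : deriv (fun r => σ r • T r) = fun r => σ r • deriv T r + deriv σ r • T r :=
    funext fun r => deriv_smul (hdσ r) (hdT r)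
  rw [hfirst]
  refine (((hdσ s).hasDerivAt.smul (hdT' s).hasDerivAt).add
    ((hdσ' s).hasDerivAt.smul (hdT s).hasDerivAt)).deriv.trans ?_
  rw [two_mul, add_smul]
  abel

theorem inner_deriv_deriv_smul_self_of_norm_eq {σ : ℝ → ℝ} {T : ℝ → E} {L s : ℝ}
    (hσ : ContDiff ℝ 2 σ) (hT : ContDiff ℝ 2 T) (hL : ∀ t, ‖T t‖ = L) :
    ⟪deriv (deriv fun r => σ r • T r) s, T s⟫ =
      L ^ 2 * deriv (deriv σ) s - ‖deriv T s‖ ^ 2 * σ s := by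
  rw [deriv_deriv_smul hσ hT, inner_add_left, inner_add_left, real_inner_smul_left,
    real_inner_smul_left, real_inner_smul_left, real_inner_self_eq_norm_sq, hL,
    inner_deriv_self_eq_zero_of_norm_eq (hT.differentiable (by norm_num)) hL,
    inner_deriv_deriv_self_eq_neg_of_norm_eq hT hL]
  ring

theorem integral_inner_deriv_eq_neg_of_periodic {f g : ℝ → E} {a T : ℝ}
    (hf : ContDiff ℝ 1 f) (hg : ContDiff ℝ 1 g)
    (hpf : Function.Periodic f T) (hpg : Function.Periodic g T) :
    ∫ s in a..a + T, ⟪deriv f s, g s⟫ = -∫ s in a..a + T, ⟪f s, deriv g s⟫ := by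
  have hdf : Differentiable ℝ f := hf.differentiable one_ne_zero
  have hdg : Differentiable ℝ g := hg.differentiable one_ne_zero
  have hint_f : IntervalIntegrable (fun s => ⟪f s, deriv g s⟫) volume a (a + T) :=
    (hf.continuous.inner (hg.continuous_deriv le_rfl)).intervalIntegrable _ _
  have hint_g : IntervalIntegrable (fun s => ⟪deriv f s, g s⟫) volume a (a + T) :=
    (hf.continuous_deriv le_rfl |>.inner hg.continuous).intervalIntegrable _ _
  have hftc := integral_eq_sub_of_hasDerivAt
    (fun s _ => (hdf s).hasDerivAt.inner ℝ (hdg s).hasDerivAt) (hint_f.add hint_g)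
  rw [integral_add hint_f hint_g, hpf a, hpg a, sub_self] at hftc
  linarith

end InnerProduct

theorem stmt1 (d : ℕ)
    (η z : ℝ → EuclideanSpace ℝ (Fin d)) (σ : ℝ → ℝ) (L c : ℝ)
    (hη : ContDiff ℝ 4 η) (hz : ContDiff ℝ 2 z) (hσ : ContDiff ℝ 2 σ)
    (hperη : Function.Periodic η 1)
    (hperσ : Function.Periodic σ 1)
    (hspeed : ∀ s, ‖deriv η s‖ = L)
    (hode : ∀ s, L ^ 2 * deriv (deriv σ) s - ‖deriv (deriv η) s‖ ^ 2 * σ s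
        = ⟪deriv z s, deriv η s⟫ + c)
    (hσmean : (∫ s in (0:ℝ)..1, σ s) = 0) :
    (∃ C : ℝ, ∀ s,
        ⟪deriv (fun u => z u - deriv (fun r => σ r • deriv η r) u) s, deriv η s⟫ = C) ∧
    (∀ v : ℝ → EuclideanSpace ℝ (Fin d), ContDiff ℝ 1 v → Function.Periodic v 1 →
        (∃ Cv : ℝ, ∀ s, ⟪deriv v s, deriv η s⟫ = Cv) →
        (∫ s in (0:ℝ)..1, v s) = 0 →
        (∫ s in (0:ℝ)..1, ⟪deriv (fun r => σ r • deriv η r) s, v s⟫) = 0) := by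
  have hT : ContDiff ℝ 3 (deriv η) := hη.deriv'
  have hP : ContDiff ℝ 2 (fun r => σ r • deriv η r) := hσ.smul (hT.of_le (by norm_num))
  refine ⟨⟨-c, fun s => ?_⟩, ?_⟩
  · rw [deriv_fun_sub (hz.differentiable (by norm_num) s)
        (hP.deriv'.differentiable one_ne_zero s), inner_sub_left,
      inner_deriv_deriv_smul_self_of_norm_eq hσ (hT.of_le (by norm_num)) hspeed, hode s]
    ring
  · rintro v hv hperv ⟨Cv, hCv⟩ -
    have hperP : Function.Periodic (fun r => σ r • deriv η r) 1 := fun r => by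
      simp only [hperσ r, hperη.deriv r]
    have hparts := integral_inner_deriv_eq_neg_of_periodic (a := 0)
      (hP.of_le (by norm_num)) hv hperP hperv
    have hCv' : ∀ s, ⟪deriv η s, deriv v s⟫ = Cv :=
      fun s => (real_inner_comm _ _).trans (hCv s)
    rw [zero_add] at hparts
    simp only [hparts, real_inner_smul_left, hCv', intervalIntegral.integral_mul_const, hσmean,
      zero_mul, neg_zero]
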